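/- Let R be a Noetherian local ring of dimension d ≥ 1, 𝓘 = {I_n} a graded m_R-family, v an m_R-valuation of R, and suppose v(𝓘) = c > 0, where v(𝓘) = inf_{m>0} v(I_m)/m. Then I_n ⊆ I(v)_{⌈cn⌉} for all n, where I(v)_m = {f ∈ R : v(f) ≥ m}; consequently e(𝓘) ≥ c^d · e(𝓘(v)) where 𝓘(v) = {I(v)_n}. In particular, if e(𝓘(v)) > 0 and e(𝓘) = 0, then v(𝓘) = 0. -/

import Mathlib

open Filter IsLocalRing Topology

/-- The length of an `R`-module `M`, defined as the Krull dimension of its lattice of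
submodules (this agrees with the usual length for modules of finite length). -/
noncomputable def modLength (R M : Type*) [CommRing R] [AddCommGroup M] [Module R M] : ℝ :=
  ((WithBot.unbotD 0 (Order.krullDim (Submodule R M))).toNat : ℝ)

/-- The Hilbert–Samuel multiplicity `e(I) = lim_n d! ℓ(R/Iⁿ)/nᵈ` of an ideal `I` in a
`d`-dimensional ring (expressed as a `limsup`, which agrees with the limit whenever the
limit exists, e.g. for `m`-primary ideals in Noetherian local rings). -/
noncomputable def hsMult (d : ℕ) {R : Type*} [CommRing R] (I : Ideal R) : ℝ :=
  Filter.limsup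
    (fun n : ℕ => (Nat.factorial d : ℝ) * modLength R (R ⧸ I ^ n) / (n : ℝ) ^ d)
    Filter.atTop

/-- A graded family of `m_R`-primary ideals: `I 0 = R`, `I m · I n ⊆ I (m+n)`, and each
`I n` (`n > 0`) is `m_R`-primary, i.e. `m_R ^ k ⊆ I n ⊆ m_R` for some `k`. -/
structure GradedFamily (R : Type*) [CommRing R] [IsLocalRing R] where
  I : ℕ → Ideal R
  I_zero : I 0 = ⊤
  mul_le : ∀ m n : ℕ, I m * I n ≤ I (m + n)
  primary : ∀ n : ℕ, 0 < n → (∃ k : ℕ, maximalIdeal R ^ k ≤ I n) ∧ I n ≤ maximalIdeal R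
open scoped ENNReal

/-- An `m_R`-valuation of the local ring `R`: an additive `ℝ≥0∞`-valued valuation which is
positive on the maximal ideal and whose value group is `ℤ` (encoded by taking values in
`ℕ ∪ {∞}` and attaining every natural number). -/
structure MRValuation (R : Type*) [CommRing R] [IsLocalRing R] where
  v : R → ℝ≥0∞
  map_zero : v 0 = ⊤
  map_one : v 1 = 0
  map_mul : ∀ a b : R, v (a * b) = v a + v b
  min_le_map_add : ∀ a b : R, min (v a) (v b) ≤ v (a + b)
  pos_of_mem_maximalIdeal : ∀ f ∈ maximalIdeal R, 0 < v f
  integer_valued : ∀ f : R, v f = ⊤ ∨ ∃ n : ℕ, v f = n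
  value_group_int : ∀ n : ℕ, ∃ f : R, v f = n

/-- `v(𝓘) = inf_{m > 0} v(I_m)/m`, where `v(I) = inf {v f : f ∈ I}`. -/
noncomputable def valFam {R : Type*} [CommRing R] [IsLocalRing R]
    (w : MRValuation R) (I : ℕ → Ideal R) : ℝ≥0∞ :=
  ⨅ (m : ℕ) (_ : 0 < m), (⨅ f ∈ I m, w.v f) / (m : ℝ≥0∞)

/-- The `n`-th saturation ideal `Ĩ_n = {f ∈ m_R : v(f) ≥ n·v(𝓘) for all m_R-valuations v}`. -/
def satSet {R : Type*} [CommRing R] [IsLocalRing R] (I : ℕ → Ideal R) (n : ℕ) : Set R :=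
  {f : R | f ∈ maximalIdeal R ∧ ∀ w : MRValuation R, (n : ℝ≥0∞) * valFam w I ≤ w.v f}


/-- The valuation ideal `I(v)_n = {f ∈ R : v(f) ≥ n}`. -/
noncomputable def valIdealFil {R : Type*} [CommRing R] [IsLocalRing R]
    (w : MRValuation R) (n : ℕ) : Ideal R where
  carrier := {f : R | (n : ℝ≥0∞) ≤ w.v f}
  zero_mem' := by simp [w.map_zero]
  add_mem' := fun {a b} ha hb => le_trans (le_min ha hb) (w.min_le_map_add a b)
  smul_mem' := fun c x hx => by
    have h : w.v x ≤ w.v (c * x) := by rw [w.map_mul]; exact le_add_self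
    simpa [smul_eq_mul] using le_trans hx h


section Helpers

open Order

lemma enat_toNat_lt' {a b : ℕ∞} (hb : b ≠ ⊤) (h : a < b) : a.toNat < b.toNat := by
  lift b to ℕ using hb
  lift a to ℕ using h.ne_top
  exact_mod_cast h

lemma natCast_ne_top' (m : ℕ) : (m : ℕ∞) ≠ ⊤ := by exact_mod_cast WithTop.coe_ne_top

lemma prodChainBound {α β : Type*} [Preorder α] [Preorder β] (m k : ℕ)
    (hα : ∀ p : LTSeries α, p.length ≤ m) (hβ : ∀ p : LTSeries β, p.length ≤ k) :
    ∀ p : LTSeries (α × β), p.length ≤ m + k := by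
  have hha : ∀ a : α, Order.height a ≤ (m : ℕ∞) := fun a =>
    Order.height_le fun q _ => by exact_mod_cast hα q
  have hhb : ∀ b : β, Order.height b ≤ (k : ℕ∞) := fun b =>
    Order.height_le fun q _ => by exact_mod_cast hβ q
  have hfa : ∀ a : α, Order.height a ≠ ⊤ :=
    fun a => ne_top_of_le_ne_top (natCast_ne_top' m) (hha a)
  have hfb : ∀ b : β, Order.height b ≠ ⊤ :=
    fun b => ne_top_of_le_ne_top (natCast_ne_top' k) (hhb b)
  set f : α × β → ℕ := fun x => (Order.height x.1).toNat + (Order.height x.2).toNat with hf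
  have hmono : StrictMono f := by
    intro x y hxy
    rcases Prod.lt_iff.mp hxy with ⟨h1, h2⟩ | ⟨h1, h2⟩
    · have e1 : Order.height x.1 < Order.height y.1 :=
        Order.height_strictMono h1 (lt_top_iff_ne_top.mpr (hfa x.1))
      have e2 : Order.height x.2 ≤ Order.height y.2 := Order.height_mono h2
      have := enat_toNat_lt' (hfa y.1) e1
      exact Nat.add_lt_add_of_lt_of_le this (ENat.toNat_le_toNat e2 (hfb y.2))
    · have e1 : Order.height x.1 ≤ Order.height y.1 := Order.height_mono h1
      have e2 : Order.height x.2 < Order.height y.2 :=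
        Order.height_strictMono h2 (lt_top_iff_ne_top.mpr (hfb x.2))
      have := enat_toNat_lt' (hfb y.2) e2
      exact Nat.add_lt_add_of_le_of_lt (ENat.toNat_le_toNat e1 (hfa y.1)) this
  intro p
  have hbd : ∀ x : α × β, f x ≤ m + k := by
    intro x
    have h1 : (Order.height x.1).toNat ≤ m := by
      have := ENat.toNat_le_toNat (hha x.1) (natCast_ne_top' m)
      simpa using this
    have h2 : (Order.height x.2).toNat ≤ k := by
      have := ENat.toNat_le_toNat (hhb x.2) (natCast_ne_top' k)
      simpa using this
    exact Nat.add_le_add h1 h2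
  have h1 := LTSeries.head_add_length_le_nat (p.map f hmono)
  have h2 : (p.map f hmono).last ≤ m + k := hbd _
  have h3 : (p.map f hmono).length = p.length := rfl
  omega

lemma simpleOrderChainBound {α : Type*} [PartialOrder α] [BoundedOrder α] [IsSimpleOrder α]
    (p : LTSeries α) : p.length ≤ 1 := by
  by_contra h
  push_neg at h
  have a := p.step ⟨0, by omega⟩
  have b := p.step ⟨1, by omega⟩
  have e : Fin.succ ⟨0, by omega⟩ = (Fin.castSucc ⟨1, by omega⟩ : Fin (p.length + 1)) := rfl
  rcases eq_bot_or_eq_top (p (Fin.succ ⟨0, by omega⟩)) with hb | ht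
  · exact absurd (hb ▸ a) (by simp)
  · rw [e] at ht
    rw [ht] at b
    exact absurd b (by simp)

lemma chainBound_of_isFiniteLength {R : Type*} [Ring R] {M : Type*} [AddCommGroup M] [Module R M]
    (h : IsFiniteLength R M) : ∃ n : ℕ, ∀ p : LTSeries (Submodule R M), p.length ≤ n := by
  induction' h with M _ _ _ M _ _ N _ hN ih
  · have : Subsingleton (Submodule R M) := by
      constructor
      intro p q
      ext x
      have : x = 0 := Subsingleton.elim x 0
      subst this
      simp
    exact ⟨0, fun p => by
      by_contra hh
      push_neg at hh
      exact absurd (Subsingleton.elim _ _) (ne_of_lt (show p (Fin.castSucc ⟨0, hh⟩) < p (Fin.succ ⟨0, hh⟩) from p.step ⟨0, hh⟩))⟩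
  · obtain ⟨n, hn⟩ := ih
    refine ⟨n + 1, fun p => ?_⟩
    set F : Submodule R M → Submodule R N × Submodule R (M ⧸ N) :=
      fun A => (A.comap N.subtype, A.map N.mkQ) with hF
    have hmono : StrictMono F := by
      intro A B hAB
      refine lt_of_le_of_ne ⟨Submodule.comap_mono hAB.le, Submodule.map_mono hAB.le⟩ ?_
      intro hEq
      have h1 : A.comap N.subtype = B.comap N.subtype := congrArg Prod.fst hEq
      have h2 : A.map N.mkQ = B.map N.mkQ := congrArg Prod.snd hEq
      have e1 : A ⊓ N = B ⊓ N := by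
        have := congrArg (Submodule.map N.subtype) h1
        rwa [Submodule.map_comap_subtype, Submodule.map_comap_subtype,
          inf_comm N A, inf_comm N B] at this
      have e2 : A ⊔ N = B ⊔ N := by
        have := congrArg (Submodule.comap N.mkQ) h2
        rwa [Submodule.comap_map_mkQ, Submodule.comap_map_mkQ,
          sup_comm N A, sup_comm N B] at this
      exact absurd (eq_of_le_of_inf_le_of_sup_le hAB.le e1.ge e2.ge) (ne_of_lt hAB)
    exact prodChainBound n 1 hn (fun q => simpleOrderChainBound q) (p.map F hmono)

lemma artinian_of_annihilated {R M : Type*} [CommRing R] [IsLocalRing R] [AddCommGroup M]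
    [Module R M] [Module.Finite R M]
    (h : ∀ r ∈ maximalIdeal R, ∀ x : M, r • x = 0) : IsArtinian R M := by
  have htor : Module.IsTorsionBySet R M (maximalIdeal R) := fun x a => h a.1 a.2 x
  letI : Module (R ⧸ maximalIdeal R) M := htor.module
  haveI : IsScalarTower R (R ⧸ maximalIdeal R) M := htor.isScalarTower
  haveI : Module.Finite (R ⧸ maximalIdeal R) M :=
    Module.Finite.of_restrictScalars_finite R _ _
  letI : Field (R ⧸ maximalIdeal R) := Ideal.Quotient.field _
  haveI hart : IsArtinian (R ⧸ maximalIdeal R) M := isArtinian_of_fg_of_artinian'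
  let G : Submodule R M → Submodule (R ⧸ maximalIdeal R) M := fun p =>
    { carrier := p
      add_mem' := fun ha hb => p.add_mem ha hb
      zero_mem' := p.zero_mem
      smul_mem' := fun c x hx => by
        obtain ⟨r, rfl⟩ := Ideal.Quotient.mk_surjective c
        show (Ideal.Quotient.mk _ r) • x ∈ p
        rw [show (Ideal.Quotient.mk (maximalIdeal R) r) = algebraMap R _ r from rfl,
          algebraMap_smul]
        exact p.smul_mem r hx }
  have hG : StrictMono G := by
    intro p q hpq
    rw [lt_iff_le_not_ge] at hpq ⊢
    exact ⟨fun x hx => hpq.1 hx, fun hc => hpq.2 fun x hx => hc hx⟩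
  exact isArtinian_iff _ _ |>.mpr (hG.wellFoundedLT.wf)

lemma artinian_quot_pow {R : Type*} [CommRing R] [IsLocalRing R] [IsNoetherianRing R] (t : ℕ) :
    IsArtinian R (R ⧸ (maximalIdeal R ^ t : Ideal R)) := by
  induction t with
  | zero =>
      have : Subsingleton (R ⧸ (maximalIdeal R ^ 0 : Ideal R)) := by
        rw [pow_zero, Ideal.one_eq_top]
        exact Submodule.Quotient.subsingleton_iff.mpr rfl
      infer_instance
  | succ t ih =>
      set m := maximalIdeal R
      set S : Submodule R (R ⧸ (m ^ (t+1) : Ideal R)) :=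
        Submodule.map (m ^ (t+1) : Ideal R).mkQ (m ^ t : Ideal R) with hS
      haveI hnoeth : IsNoetherian R (R ⧸ (m ^ (t+1) : Ideal R)) := inferInstance
      haveI hfin : Module.Finite R S := by
        exact Module.Finite.iff_fg.mpr (IsNoetherian.noetherian S)
      have hann : ∀ r ∈ m, ∀ x : S, r • x = 0 := by
        intro r hr x
        obtain ⟨y, hy, hyx⟩ := Submodule.mem_map.mp x.2
        apply Subtype.ext
        show r • (x : R ⧸ (m ^ (t+1) : Ideal R)) = 0
        rw [← hyx]
        have : (m ^ (t+1) : Ideal R).mkQ (r • y) = 0 := by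
          rw [Submodule.mkQ_apply, Submodule.Quotient.mk_eq_zero]
          have : r * y ∈ m * m ^ t := Ideal.mul_mem_mul hr hy
          rw [smul_eq_mul]
          exact (show m * m ^ t ≤ m ^ (t+1) by rw [pow_succ, mul_comm]) this
        rw [map_smul] at this
        exact this
      haveI hSart : IsArtinian R S := artinian_of_annihilated hann
      have hle : (m ^ (t+1) : Ideal R) ≤ (m ^ t : Ideal R) :=
        Ideal.pow_le_pow_right (by omega)
      have e := Submodule.quotientQuotientEquivQuotient
        (m ^ (t+1) : Ideal R) (m ^ t : Ideal R) hle
      haveI : IsArtinian R ((R ⧸ (m ^ (t+1) : Ideal R)) ⧸ S) :=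
        isArtinian_of_linearEquiv e.symm
      exact (isArtinian_iff_submodule_quotient S).mpr ⟨hSart, this⟩

lemma artinian_quot_of_pow_le {R : Type*} [CommRing R] [IsLocalRing R] [IsNoetherianRing R]
    {J : Ideal R} {t : ℕ} (hJ : maximalIdeal R ^ t ≤ J) : IsArtinian R (R ⧸ J) := by
  haveI := artinian_quot_pow (R := R) t
  have hsurj : Function.Surjective (Submodule.mapQ (maximalIdeal R ^ t) J LinearMap.id hJ) := by
    intro x
    obtain ⟨y, rfl⟩ := Submodule.mkQ_surjective J x
    exact ⟨Submodule.Quotient.mk y, rfl⟩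
  exact isArtinian_of_surjective _ _ hsurj

lemma chainBoundQuot {R : Type*} [CommRing R] [IsLocalRing R] [IsNoetherianRing R]
    {J : Ideal R} {t : ℕ} (hJ : maximalIdeal R ^ t ≤ J) :
    ∃ n : ℕ, ∀ p : LTSeries (Submodule R (R ⧸ J)), p.length ≤ n :=
  chainBound_of_isFiniteLength
    (isFiniteLength_iff_isNoetherian_isArtinian.mpr ⟨inferInstance, artinian_quot_of_pow_le hJ⟩)

lemma toNat_unbot_mono {A B : WithBot ℕ∞} {n : ℕ} (hAB : A ≤ B)
    (hB : B ≤ ((n : ℕ∞) : WithBot ℕ∞)) :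
    (WithBot.unbotD 0 A).toNat ≤ (WithBot.unbotD 0 B).toNat := by
  induction A using WithBot.recBotCoe with
  | bot => simp
  | coe a =>
    induction B using WithBot.recBotCoe with
    | bot => simp at hAB
    | coe b =>
      simp only [WithBot.unbotD_coe]
      have hab : a ≤ b := WithBot.coe_le_coe.mp hAB
      have hbn : b ≤ (n : ℕ∞) := WithBot.coe_le_coe.mp hB
      exact ENat.toNat_le_toNat hab (ne_top_of_le_ne_top (natCast_ne_top' n) hbn)

lemma modLength_le_of_le {R : Type*} [CommRing R] {I J : Ideal R} (hIJ : I ≤ J)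
    (hb : ∃ n : ℕ, ∀ p : LTSeries (Submodule R (R ⧸ I)), p.length ≤ n) :
    modLength R (R ⧸ J) ≤ modLength R (R ⧸ I) := by
  obtain ⟨n, hn⟩ := hb
  have hsurj : Function.Surjective (Submodule.mapQ I J LinearMap.id hIJ) := by
    intro x
    obtain ⟨y, rfl⟩ := Submodule.mkQ_surjective J x
    exact ⟨Submodule.Quotient.mk y, rfl⟩
  have hstrict : StrictMono (Submodule.comap (Submodule.mapQ I J LinearMap.id hIJ)) :=
    Submodule.comap_strictMono_of_surjective hsurj
  have h2 : Order.krullDim (Submodule R (R ⧸ J)) ≤ Order.krullDim (Submodule R (R ⧸ I)) :=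
    Order.krullDim_le_of_strictMono _ hstrict
  have hI : Order.krullDim (Submodule R (R ⧸ I)) ≤ ((n : ℕ∞) : WithBot ℕ∞) := by
    rw [Order.krullDim_eq_iSup_length, WithBot.coe_le_coe]
    exact iSup_le fun p => by exact_mod_cast hn p
  exact_mod_cast Nat.cast_le.mpr (toNat_unbot_mono h2 hI)

lemma modLength_nonneg {R M : Type*} [CommRing R] [AddCommGroup M] [Module R M] :
    0 ≤ modLength R M := Nat.cast_nonneg _

lemma limsup_eq_zero_of_unbounded {f : ℕ → ℝ}
    (h : ¬ Filter.IsBoundedUnder (· ≤ ·) Filter.atTop f) :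
    Filter.limsup f Filter.atTop = 0 := by
  rw [Filter.limsup_eq]
  have he : {a : ℝ | ∀ᶠ n in Filter.atTop, f n ≤ a} = ∅ := by
    rw [Set.eq_empty_iff_forall_notMem]
    intro a ha
    exact h ⟨a, Filter.eventually_map.mpr ha⟩
  rw [he]
  exact Real.sInf_empty

end Helpers

/-- Let `R` be a `d`-dimensional Noetherian local ring (`d ≥ 1`),
`𝓘 = {I_n}` a graded `m_R`-family and `v` an `m_R`-valuation with `v(𝓘) = c > 0`.  Then
`I_n ⊆ I(v)_{⌈cn⌉}` for all `n`, and consequently `e(𝓘) ≥ cᵈ · e(𝓘(v))`; in particular if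
`e(𝓘(v)) > 0` then `e(𝓘) ≠ 0`. -/
theorem family_le_valuation_filtration
    {R : Type*} [CommRing R] [IsLocalRing R] [IsNoetherianRing R] (d : ℕ) (hd1 : 1 ≤ d)
    (hd : ringKrullDim R = d) (𝓘 : GradedFamily R) (w : MRValuation R)
    (c : ℝ) (hc : 0 < c) (hvc : valFam w 𝓘.I = ENNReal.ofReal c) :
    (∀ n : ℕ, (𝓘.I n : Set R) ⊆ (valIdealFil w ⌈c * n⌉₊ : Set R)) ∧
    (∀ L₁ L₂ : ℝ,
      Tendsto (fun n : ℕ => hsMult d (𝓘.I n) / (n : ℝ) ^ d) atTop (nhds L₁) →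
      Tendsto (fun n : ℕ => hsMult d (valIdealFil w n) / (n : ℝ) ^ d) atTop (nhds L₂) →
      c ^ d * L₂ ≤ L₁ ∧ (0 < L₂ → L₁ ≠ 0)) := by
  classical
  have hsub : ∀ n : ℕ, (𝓘.I n : Set R) ⊆ (valIdealFil w ⌈c * n⌉₊ : Set R) := by
    intro n f hf
    show ((⌈c * (n : ℝ)⌉₊ : ℕ) : ℝ≥0∞) ≤ w.v f
    rcases Nat.eq_zero_or_pos n with rfl | hn
    · norm_num
    · have h1 : ENNReal.ofReal c ≤ (⨅ g ∈ 𝓘.I n, w.v g) / (n : ℝ≥0∞) := by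
        rw [← hvc]
        exact iInf₂_le n hn
      have h2 : (⨅ g ∈ 𝓘.I n, w.v g) ≤ w.v f := iInf₂_le f hf
      have h3 : ENNReal.ofReal c * (n : ℝ≥0∞) ≤ w.v f :=
        le_trans ((ENNReal.le_div_iff_mul_le
          (Or.inl (by exact_mod_cast hn.ne')) (Or.inl (ENNReal.natCast_ne_top n))).mp h1) h2
      rcases w.integer_valued f with ht | ⟨N, hN⟩
      · rw [ht]; exact le_top
      · rw [hN] at h3 ⊢
        have h4 : ENNReal.ofReal (c * n) ≤ (N : ℝ≥0∞) := by
          rwa [ENNReal.ofReal_mul hc.le, ENNReal.ofReal_natCast]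
        have h5 : c * n ≤ (N : ℝ) := by
          rw [← ENNReal.ofReal_natCast] at h4
          exact (ENNReal.ofReal_le_ofReal_iff (Nat.cast_nonneg N)).mp h4
        exact_mod_cast Nat.cast_le.mpr (Nat.ceil_le.mpr h5)
  refine ⟨hsub, ?_⟩
  intro L₁ L₂ hL₁ hL₂
  set mR := maximalIdeal R with hmR
  -- the valuation ideals are m-primary
  have hVm : ∀ j : ℕ, 1 ≤ j → valIdealFil w j ≤ mR := by
    intro j hj f hf
    rw [hmR, IsLocalRing.mem_maximalIdeal]
    intro hu
    obtain ⟨u, rfl⟩ := hu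
    have h0 : w.v (u * (u⁻¹ : Rˣ)) = 0 := by rw [Units.mul_inv]; exact w.map_one
    rw [w.map_mul] at h0
    have hvu : w.v u = 0 := by
      rcases add_eq_zero.mp h0 with ⟨h, _⟩
      exact h
    have : ((j : ℕ) : ℝ≥0∞) ≤ 0 := hvu ▸ hf
    have : (1 : ℝ≥0∞) ≤ 0 := le_trans (by exact_mod_cast hj) this
    simp at this
  have hm1 : mR ≤ valIdealFil w 1 := by
    intro f hf
    show ((1 : ℕ) : ℝ≥0∞) ≤ w.v f
    have hpos := w.pos_of_mem_maximalIdeal f hf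
    rcases w.integer_valued f with ht | ⟨N, hN⟩
    · rw [ht]; exact le_top
    · rw [hN] at hpos ⊢
      have : N ≠ 0 := by
        intro h
        rw [h] at hpos
        simp at hpos
      exact_mod_cast Nat.one_le_cast.mpr (Nat.one_le_iff_ne_zero.mpr this)
  have hVpow : ∀ j : ℕ, mR ^ j ≤ valIdealFil w j := by
    intro j
    induction j with
    | zero =>
        intro f _
        show ((0 : ℕ) : ℝ≥0∞) ≤ w.v f
        simp
    | succ j ih =>
        have hmul : valIdealFil w j * valIdealFil w 1 ≤ valIdealFil w (j + 1) := by
          rw [Ideal.mul_le]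
          intro r hr s hs
          show ((j + 1 : ℕ) : ℝ≥0∞) ≤ w.v (r * s)
          rw [w.map_mul]
          have hr' : ((j : ℕ) : ℝ≥0∞) ≤ w.v r := hr
          have hs' : ((1 : ℕ) : ℝ≥0∞) ≤ w.v s := hs
          push_cast at hr' hs' ⊢
          exact add_le_add hr' hs' 
        calc mR ^ (j+1) = mR ^ j * mR := by rw [pow_succ]
        _ ≤ valIdealFil w j * valIdealFil w 1 := Ideal.mul_mono ih hm1
        _ ≤ valIdealFil w (j + 1) := hmul
  -- the term sequences
  set F : Ideal R → ℕ → ℝ :=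
    fun J k => (Nat.factorial d : ℝ) * modLength R (R ⧸ J ^ k) / (k : ℝ) ^ d with hFdef
  have hsEq : ∀ J : Ideal R, hsMult d J = Filter.limsup (F J) Filter.atTop := fun _ => rfl
  have hF0 : ∀ (J : Ideal R) (k : ℕ), 0 ≤ F J k := by
    intro J k
    exact div_nonneg (mul_nonneg (Nat.cast_nonneg _) modLength_nonneg) (by positivity)
  have hFmono : ∀ I J : Ideal R, I ≤ J → (∃ t : ℕ, mR ^ t ≤ I) → ∀ k, F J k ≤ F I k := by
    rintro I J hIJ ⟨t, ht⟩ k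
    have hlen : modLength R (R ⧸ J ^ k) ≤ modLength R (R ⧸ I ^ k) := by
      apply modLength_le_of_le (Ideal.pow_right_mono hIJ k)
      apply chainBoundQuot (t := t * k)
      rw [pow_mul]
      exact Ideal.pow_right_mono ht k
    rcases Nat.eq_zero_or_pos k with rfl | hk
    · simp only [hFdef]
      norm_num [zero_pow (show d ≠ 0 by omega)]
    · exact (div_le_div_iff_of_pos_right (by positivity)).mpr
        (mul_le_mul_of_nonneg_left hlen (Nat.cast_nonneg _))
  by_cases hB : Filter.IsBoundedUnder (· ≤ ·) Filter.atTop (F mR)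
  · -- bounded case: genuine comparison of multiplicities
    have hbdd : ∀ (J : Ideal R) (t : ℕ), 1 ≤ t → mR ^ t ≤ J →
        Filter.IsBoundedUnder (· ≤ ·) Filter.atTop (F J) := by
      intro J t ht hJ
      obtain ⟨C, hC⟩ := hB
      rw [Filter.eventually_map] at hC
      have htend : Filter.Tendsto (fun k : ℕ => t * k) Filter.atTop Filter.atTop :=
        Filter.tendsto_atTop_mono (fun k => Nat.le_mul_of_pos_left k ht) Filter.tendsto_id
      have hCk : ∀ᶠ k : ℕ in Filter.atTop, F mR (t * k) ≤ C := htend.eventually hC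
      refine ⟨(t : ℝ) ^ d * C, ?_⟩
      rw [Filter.eventually_map]
      filter_upwards [hCk, Filter.eventually_ge_atTop 1] with k hk hk1
      have hlen : modLength R (R ⧸ J ^ k) ≤ modLength R (R ⧸ (mR ^ (t * k) : Ideal R)) := by
        apply modLength_le_of_le
        · rw [pow_mul]
          exact Ideal.pow_right_mono hJ k
        · exact chainBoundQuot (le_refl (mR ^ (t * k)))
      have heq : F J k ≤ (t : ℝ) ^ d * F mR (t * k) := by
        have hkpos : (0 : ℝ) < (k : ℝ) ^ d := by positivity
        have htpos : (0 : ℝ) < (t : ℝ) ^ d := by positivity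
        have h1 : (t : ℝ) ^ d * F mR (t * k) =
            (Nat.factorial d : ℝ) * modLength R (R ⧸ (mR ^ (t * k) : Ideal R)) / (k : ℝ) ^ d := by
          simp only [hFdef]
          rw [Nat.cast_mul, mul_pow]
          field_simp
        rw [h1]
        exact (div_le_div_iff_of_pos_right hkpos).mpr
          (mul_le_mul_of_nonneg_left hlen (Nat.cast_nonneg _))
      calc F J k ≤ (t : ℝ) ^ d * F mR (t * k) := heq
      _ ≤ (t : ℝ) ^ d * C := mul_le_mul_of_nonneg_left hk (by positivity)
    have hkey : ∀ n : ℕ, 1 ≤ n → hsMult d (valIdealFil w ⌈c * n⌉₊) ≤ hsMult d (𝓘.I n) := by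
      intro n hn
      obtain ⟨⟨t, ht⟩, hIm⟩ := 𝓘.primary n hn
      have ht' : mR ^ max t 1 ≤ 𝓘.I n := le_trans (Ideal.pow_le_pow_right (le_max_left t 1)) ht
      have hVle : 𝓘.I n ≤ valIdealFil w ⌈c * n⌉₊ := fun f hf => hsub n hf
      rw [hsEq, hsEq]
      refine Filter.limsup_le_limsup (Filter.Eventually.of_forall
        (hFmono (𝓘.I n) _ hVle ⟨max t 1, ht'⟩)) ?_ ?_
      · exact Filter.IsBoundedUnder.isCoboundedUnder_le
          ⟨0, Filter.eventually_map.mpr (Filter.Eventually.of_forall (fun k => hF0 _ k))⟩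
      · exact hbdd (𝓘.I n) (max t 1) (le_max_right t 1) ht'
    have hceil : Filter.Tendsto (fun n : ℕ => ⌈c * (n : ℝ)⌉₊) Filter.atTop Filter.atTop := by
      rw [Filter.tendsto_atTop]
      intro b
      have hcn : Filter.Tendsto (fun n : ℕ => c * (n : ℝ)) Filter.atTop Filter.atTop :=
        (tendsto_natCast_atTop_atTop (R := ℝ)).const_mul_atTop hc
      filter_upwards [hcn.eventually_ge_atTop (b : ℝ)] with n hn
      exact_mod_cast Nat.cast_le.mp (le_trans hn (Nat.le_ceil _))
    have hratio : Filter.Tendsto (fun n : ℕ => ((⌈c * (n : ℝ)⌉₊ : ℝ) / (n : ℝ)))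
        Filter.atTop (nhds c) := by
      have hupper : Filter.Tendsto (fun n : ℕ => c + 1 / (n : ℝ)) Filter.atTop (nhds c) := by
        have := tendsto_one_div_atTop_nhds_zero_nat (𝕜 := ℝ)
        simpa using Filter.Tendsto.add (tendsto_const_nhds (x := c)) this
      refine tendsto_of_tendsto_of_tendsto_of_le_of_le' tendsto_const_nhds hupper ?_ ?_
      · filter_upwards [Filter.eventually_ge_atTop 1] with n hn
        have hn0 : (0 : ℝ) < (n : ℝ) := by exact_mod_cast hn
        rw [le_div_iff₀ hn0]
        exact Nat.le_ceil _
      · filter_upwards [Filter.eventually_ge_atTop 1] with n hn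
        have hn0 : (0 : ℝ) < (n : ℝ) := by exact_mod_cast hn
        rw [div_le_iff₀ hn0]
        have := Nat.ceil_lt_add_one (by positivity : (0:ℝ) ≤ c * (n : ℝ))
        calc (⌈c * (n : ℝ)⌉₊ : ℝ) ≤ c * (n : ℝ) + 1 := this.le
        _ ≤ (c + 1 / (n : ℝ)) * (n : ℝ) := by
            rw [add_mul, div_mul_cancel₀ _ hn0.ne']
    have h2 : Filter.Tendsto (fun n : ℕ => hsMult d (valIdealFil w ⌈c * (n : ℝ)⌉₊) / (n : ℝ) ^ d)
        Filter.atTop (nhds (L₂ * c ^ d)) := by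
      have ha : Filter.Tendsto
          (fun n : ℕ => hsMult d (valIdealFil w ⌈c * (n : ℝ)⌉₊) / ((⌈c * (n : ℝ)⌉₊ : ℕ) : ℝ) ^ d)
          Filter.atTop (nhds L₂) := hL₂.comp hceil
      have hb : Filter.Tendsto (fun n : ℕ => ((⌈c * (n : ℝ)⌉₊ : ℝ) / (n : ℝ)) ^ d)
          Filter.atTop (nhds (c ^ d)) := hratio.pow d
      refine (ha.mul hb).congr' ?_
      filter_upwards [Filter.eventually_ge_atTop 1] with n hn
      have hn0 : (0 : ℝ) < (n : ℝ) := by exact_mod_cast hn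
      have hcl : (0 : ℝ) < ((⌈c * (n : ℝ)⌉₊ : ℕ) : ℝ) := by
        have : 0 < ⌈c * (n : ℝ)⌉₊ := Nat.ceil_pos.mpr (by positivity)
        exact_mod_cast this
      rw [div_pow]
      field_simp
    have hle : ∀ᶠ n : ℕ in Filter.atTop,
        hsMult d (valIdealFil w ⌈c * (n : ℝ)⌉₊) / (n : ℝ) ^ d ≤ hsMult d (𝓘.I n) / (n : ℝ) ^ d := by
      filter_upwards [Filter.eventually_ge_atTop 1] with n hn
      have hnp : (0 : ℝ) < (n : ℝ) ^ d := by
        have : (0 : ℝ) < (n : ℝ) := by exact_mod_cast hn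
        positivity
      exact (div_le_div_iff_of_pos_right hnp).mpr (hkey n hn)
    have hfinal : L₂ * c ^ d ≤ L₁ := le_of_tendsto_of_tendsto h2 hL₁ hle
    constructor
    · calc c ^ d * L₂ = L₂ * c ^ d := mul_comm _ _
      _ ≤ L₁ := hfinal
    · intro hl2
      exact (lt_of_lt_of_le (mul_pos hl2 (pow_pos hc d)) hfinal).ne' 
  · -- degenerate case: all multiplicities vanish
    have hzero : ∀ (J : Ideal R) (t : ℕ), mR ^ t ≤ J → J ≤ mR → hsMult d J = 0 := by
      intro J t hJ hJm
      rw [hsEq]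
      apply limsup_eq_zero_of_unbounded
      rintro ⟨C, hC⟩
      rw [Filter.eventually_map] at hC
      apply hB
      refine ⟨C, ?_⟩
      rw [Filter.eventually_map]
      filter_upwards [hC] with k hk
      exact le_trans (hFmono J mR hJm ⟨t, hJ⟩ k) hk
    have hz1 : ∀ᶠ n : ℕ in Filter.atTop, hsMult d (𝓘.I n) / (n : ℝ) ^ d = 0 := by
      filter_upwards [Filter.eventually_ge_atTop 1] with n hn
      obtain ⟨⟨t, ht⟩, hIm⟩ := 𝓘.primary n hn
      rw [hzero (𝓘.I n) t ht hIm, zero_div]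
    have hz2 : ∀ᶠ n : ℕ in Filter.atTop, hsMult d (valIdealFil w n) / (n : ℝ) ^ d = 0 := by
      filter_upwards [Filter.eventually_ge_atTop 1] with n hn
      rw [hzero (valIdealFil w n) n (hVpow n) (hVm n hn), zero_div]
    have hL1 : L₁ = 0 :=
      tendsto_nhds_unique hL₁ (Filter.Tendsto.congr' (by filter_upwards [hz1] with n h; exact h.symm) tendsto_const_nhds)
    have hL2 : L₂ = 0 :=
      tendsto_nhds_unique hL₂ (Filter.Tendsto.congr' (by filter_upwards [hz2] with n h; exact h.symm) tendsto_const_nhds)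
    subst hL1 hL2
    exact ⟨by simp, fun h => absurd h (lt_irrefl 0)⟩
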